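/- Lower bound of the quadratic form of the symmetrized squared Hamiltonian 𝐇 = ½(Ĥᴱ(Ĥᴱ)† + (Ĥᴱ)†Ĥᴱ): for every finitely supported sequence ψ : ℕ → ℂ with ψ 0 = 0, one has Σ_{n≥1} C₀(n/2)·|ψ n|² + Σ_{n≥1} 2·C₊(n/2)·Re((conj (ψ (n+2)))·(ψ n)) ≥ (1/2)·Σ_{n≥1} |ψ n|², where for j = n/2: C₊(j) = −(j² + 2j + 3/8), C₀(1/2) = 17/8 (case n = 1), and C₀(j) = 2j² + 2j + 7/4 for n ≥ 2. (The left-hand side is the inner product ⟨ψ, 𝐇ψ⟩ in the spin-network basis, so the nonzero part of the spectrum of 𝐇 is bounded below by 1/2.) -/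

import Mathlib

/-- C₊(n/2) = −((n/2)² + 2·(n/2) + 3/8). -/
noncomputable def Cplus (n : ℕ) : ℝ := -(((n : ℝ) / 2) ^ 2 + 2 * ((n : ℝ) / 2) + 3 / 8)

/-- C₀(1/2) = 17/8 and C₀(n/2) = 2·(n/2)² + 2·(n/2) + 7/4 for n ≥ 2. -/
noncomputable def Czero (n : ℕ) : ℝ :=
  if n = 1 then 17 / 8 else 2 * ((n : ℝ) / 2) ^ 2 + 2 * ((n : ℝ) / 2) + 7 / 4

/-!
Since `C₊ ≤ 0`, each off-diagonal term is bounded below by `C₊(n/2) (|ψ n|² + |ψ (n+2)|²)`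
(AM–GM on `2 Re (conj b * a) ≤ |a|² + |b|²`). This leaves a diagonal form whose coefficient at
`n` is `C₀(n/2) + C₊(n/2) + C₊(n/2 - 1)`: it equals `1/2` at `n = 1` and `2` for `n ≥ 3`
(and exceeds `1/2` at `n = 2`), so the diagonal form dominates `½ Σ |ψ n|²`.
-/

open Finset

lemma Cplus_nonpos (n : ℕ) : Cplus n ≤ 0 := by
  have : 0 ≤ ((n : ℝ) / 2) ^ 2 + 2 * ((n : ℝ) / 2) + 3 / 8 := by positivity
  rw [Cplus]
  linarith

lemma Czero_one_add_Cplus_one : Czero 1 + Cplus 1 = 1 / 2 := by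
  norm_num [Czero, Cplus]

lemma Cplus_add_Czero_add_two_add_Cplus_add_two (n : ℕ) :
    Cplus n + Czero (n + 2) + Cplus (n + 2) = 2 := by
  rw [Czero, if_neg (by omega), Cplus, Cplus]
  push_cast
  ring

lemma re_conj_mul_le (a b : ℂ) : (starRingEnd ℂ b * a).re ≤ (‖a‖ ^ 2 + ‖b‖ ^ 2) / 2 :=
  calc (starRingEnd ℂ b * a).re ≤ ‖starRingEnd ℂ b * a‖ := Complex.re_le_norm _
    _ = ‖b‖ * ‖a‖ := by rw [norm_mul, Complex.norm_conj]
    _ ≤ (‖a‖ ^ 2 + ‖b‖ ^ 2) / 2 := by nlinarith [sq_nonneg (‖a‖ - ‖b‖)]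

lemma mul_add_sq_norm_le_of_nonpos {c : ℝ} (hc : c ≤ 0) (a b : ℂ) :
    c * (‖a‖ ^ 2 + ‖b‖ ^ 2) ≤ 2 * c * (starRingEnd ℂ b * a).re := by
  nlinarith [mul_le_mul_of_nonpos_left (re_conj_mul_le a b) hc]

/-- The boundary terms `C₊(N/2) x(N+2) + C₊((N+1)/2) x(N+3)` vanish once `N` is past the
support of `x`. -/
lemma boundary_add_half_sum_le_diagonal_form {x : ℕ → ℝ} (hx : ∀ m, 0 ≤ x m) (N : ℕ) :
    Cplus N * x (N + 2) + Cplus (N + 1) * x (N + 3) + 1 / 2 * ∑ n ∈ range (N + 1), x (n + 1) ≤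
      ∑ n ∈ range (N + 1),
        (Czero (n + 1) * x (n + 1) + Cplus (n + 1) * (x (n + 1) + x (n + 3))) := by
  induction N with
  | zero =>
    have hC0 : Cplus 0 = -(3 / 8) := by norm_num [Cplus]
    simp only [zero_add, sum_range_one, hC0]
    linear_combination 3 / 8 * hx 2 - x 1 * Czero_one_add_Cplus_one
  | succ N ih =>
    have hdiag := Cplus_add_Czero_add_two_add_Cplus_add_two N
    simp only [sum_range_succ, mul_add] at ih ⊢
    linear_combination ih + 3 / 2 * hx (N + 2) - x (N + 2) * hdiag

theorem quadratic_form_lower_bound_general (ψ : ℕ → ℂ)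
    (hfin : (Function.support ψ).Finite) :
    (1 / 2) * ∑' n : ℕ, ‖ψ (n + 1)‖ ^ 2 ≤
      (∑' n : ℕ, Czero (n + 1) * ‖ψ (n + 1)‖ ^ 2) +
        ∑' n : ℕ, 2 * Cplus (n + 1) * ((starRingEnd ℂ) (ψ (n + 3)) * ψ (n + 1)).re := by
  obtain ⟨N, hN⟩ := hfin.bddAbove
  have hψ : ∀ m, N < m → ψ m = 0 := fun m hm =>
    Function.notMem_support.mp fun h => (hN h).not_gt hm
  have htsum {f : ℕ → ℝ} (hf : ∀ n, ψ (n + 1) = 0 → f n = 0) :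
      ∑' n, f n = ∑ n ∈ range (N + 1), f n :=
    tsum_eq_sum fun n hn => hf n (hψ _ (by simp only [mem_range] at hn; omega))
  rw [htsum fun _ h => by simp [h], htsum fun _ h => by simp [h], htsum fun _ h => by simp [h]]
  have hboundary := boundary_add_half_sum_le_diagonal_form (x := fun m => ‖ψ m‖ ^ 2)
    (fun _ => by positivity) N
  simp only [hψ (N + 2) (by omega), hψ (N + 3) (by omega), norm_zero] at hboundary
  calc 1 / 2 * ∑ n ∈ range (N + 1), ‖ψ (n + 1)‖ ^ 2
      ≤ ∑ n ∈ range (N + 1), (Czero (n + 1) * ‖ψ (n + 1)‖ ^ 2 +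
          Cplus (n + 1) * (‖ψ (n + 1)‖ ^ 2 + ‖ψ (n + 3)‖ ^ 2)) := by linarith
    _ ≤ _ := by
      rw [← sum_add_distrib]
      exact sum_le_sum fun n _ =>
        add_le_add_right (mul_add_sq_norm_le_of_nonpos (Cplus_nonpos _) _ _) _

/-- Lower bound of the quadratic form of 𝐇 = ½(Ĥᴱ(Ĥᴱ)† + (Ĥᴱ)†Ĥᴱ): for every finitely
supported ψ with ψ 0 = 0,
Σ_{n≥1} C₀(n/2)·|ψ n|² + Σ_{n≥1} 2·C₊(n/2)·Re(conj(ψ(n+2))·ψ n) ≥ (1/2)·Σ_{n≥1} |ψ n|². -/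
theorem quadratic_form_lower_bound (ψ : ℕ → ℂ)
    (hfin : (Function.support ψ).Finite) (h0 : ψ 0 = 0) :
    (1 / 2) * ∑' n : ℕ, ‖ψ (n + 1)‖ ^ 2 ≤
      (∑' n : ℕ, Czero (n + 1) * ‖ψ (n + 1)‖ ^ 2) +
        ∑' n : ℕ, 2 * Cplus (n + 1) * ((starRingEnd ℂ) (ψ (n + 3)) * ψ (n + 1)).re :=
  quadratic_form_lower_bound_general ψ hfin
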